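/- Let A₁, A₂ be C-hyperideals of commutative multiplicative hyperrings G₁, G₂ respectively, and S₁, S₂ multiplicative closed subsets of G₁, G₂. Then A₁ × A₂ is a quasi (S₁ × S₂)-primary hyperideal of G₁ × G₂ if and only if either S₁ ∩ A₁ ≠ ∅ and A₂ is a quasi S₂-primary hyperideal of G₂, or S₂ ∩ A₂ ≠ ∅ and A₁ is a quasi S₁-primary hyperideal of G₁. -/

import Mathlib

open Set

/-- A commutative multiplicative hyperring: a commutative additive group with a
commutative, associative hyperoperation `hmul` satisfying `(-a)∘b = -(a∘b)`,
weak distributivity, and having an identity element `e` with `a ∈ e∘a`. -/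
class MulHyperring (G : Type*) extends AddCommGroup G where
  hmul : G → G → Set G
  hmul_nonempty : ∀ a b : G, (hmul a b).Nonempty
  hmul_comm : ∀ a b : G, hmul a b = hmul b a
  hmul_assoc : ∀ a b c : G, (⋃ x ∈ hmul a b, hmul x c) = ⋃ x ∈ hmul b c, hmul a x
  neg_hmul : ∀ a b : G, hmul (-a) b = (fun x => -x) '' (hmul a b)
  hmul_add : ∀ a b c : G,
    hmul a (b + c) ⊆ {x | ∃ u ∈ hmul a b, ∃ v ∈ hmul a c, x = u + v}
  e : G
  e_mem : ∀ a : G, a ∈ hmul e a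

namespace MulHyperring

variable {G : Type*} [MulHyperring G]

/-- Hyperproduct of an element with a set: `a ∘ B = ⋃ b ∈ B, a ∘ b`. -/
def smulSet (a : G) (B : Set G) : Set G := ⋃ b ∈ B, hmul a b

/-- Hyperproduct of two sets. -/
def setMul (A B : Set G) : Set G := ⋃ a ∈ A, ⋃ b ∈ B, hmul a b

/-- Hyperproduct `a₁ ∘ a₂ ∘ ⋯ ∘ aₙ` of a (nonempty) list of elements. -/
def hProd : List G → Set G
  | [] => ∅
  | [a] => {a}
  | a :: b :: l => smulSet a (hProd (b :: l))

/-- `aⁿ` as a hyperproduct. -/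
def hPow (a : G) (n : ℕ) : Set G := hProd (List.replicate n a)

/-- `A` is a hyperideal of `G`. -/
def IsHyperideal (A : Set G) : Prop :=
  A.Nonempty ∧ (∀ x ∈ A, ∀ y ∈ A, x - y ∈ A) ∧ ∀ r : G, ∀ x ∈ A, hmul r x ⊆ A

/-- `A` is a `C`-hyperideal: any finite hyperproduct meeting `A` is contained in `A`. -/
def IsCHyperideal (A : Set G) : Prop :=
  IsHyperideal A ∧ ∀ l : List G, l ≠ [] → (hProd l ∩ A).Nonempty → hProd l ⊆ A

/-- The radical of a (C-)hyperideal: `{a | aⁿ ⊆ A for some n ≥ 1}`. -/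
def rad (A : Set G) : Set G := {a | ∃ n : ℕ, 1 ≤ n ∧ hPow a n ⊆ A}

/-- The hyperideal generated by a set. -/
def idealGen (X : Set G) : Set G := ⋂₀ {A | IsHyperideal A ∧ X ⊆ A}

/-- The hyperideal product of two hyperideals. -/
def idealMul (A B : Set G) : Set G := idealGen (setMul A B)

/-- Multiplicative closed subset. -/
def IsMCS (S : Set G) : Prop :=
  e ∈ S ∧ ∀ s₁ ∈ S, ∀ s₂ ∈ S, (hmul s₁ s₂ ∩ S).Nonempty

/-- Prime hyperideal. -/
def IsPrime (P : Set G) : Prop :=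
  IsHyperideal P ∧ P ≠ univ ∧ ∀ x y : G, hmul x y ⊆ P → x ∈ P ∨ y ∈ P

/-- `S`-prime hyperideal. -/
def IsSPrime (S A : Set G) : Prop :=
  IsHyperideal A ∧ A ∩ S = ∅ ∧
    ∃ t ∈ S, ∀ u v : G, hmul u v ⊆ A → hmul t u ⊆ A ∨ hmul t v ⊆ A

/-- `S`-primary hyperideal. -/
def IsSPrimary (S A : Set G) : Prop :=
  IsHyperideal A ∧ A ∩ S = ∅ ∧
    ∃ t ∈ S, ∀ u v : G, hmul u v ⊆ A → hmul t u ⊆ A ∨ hmul t v ⊆ rad A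

/-- Quasi `S`-primary hyperideal. -/
def IsQuasiSPrimary (S A : Set G) : Prop :=
  IsHyperideal A ∧ A ∩ S = ∅ ∧
    ∃ t ∈ S, ∀ u v : G, hmul u v ⊆ A → hmul t u ⊆ rad A ∨ hmul t v ⊆ rad A

/-- Weakly quasi `S`-primary hyperideal. -/
def IsWeaklyQuasiSPrimary (S A : Set G) : Prop :=
  IsHyperideal A ∧ A ∩ S = ∅ ∧
    ∃ t ∈ S, ∀ u v : G, 0 ∉ hmul u v → hmul u v ⊆ A →
      hmul t u ⊆ rad A ∨ hmul t v ⊆ rad A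

/-- Strongly quasi `S`-primary hyperideal. -/
def IsStronglyQuasiSPrimary (S A : Set G) : Prop :=
  IsHyperideal A ∧ A ∩ S = ∅ ∧
    ∃ t ∈ S, ∀ u v : G, hmul u v ⊆ A →
      smulSet t (hPow u 2) ⊆ A ∨ hmul t v ⊆ rad A

/-- The residual `(B : x) = {y | y ∘ x ⊆ B}`. -/
def colon (B : Set G) (x : G) : Set G := {y | hmul y x ⊆ B}

end MulHyperring

namespace MulHyperring

variable {G₁ G₂ : Type*} [MulHyperring G₁] [MulHyperring G₂]

/-- The product of two commutative multiplicative hyperrings. -/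
instance prodMulHyperring : MulHyperring (G₁ × G₂) where
  hmul a b := (hmul a.1 b.1) ×ˢ (hmul a.2 b.2)
  hmul_nonempty a b := (hmul_nonempty a.1 b.1).prod (hmul_nonempty a.2 b.2)
  hmul_comm a b := by rw [hmul_comm a.1 b.1, hmul_comm a.2 b.2]
  hmul_assoc a b c := by
    ext x
    have h₁ := Set.ext_iff.mp (hmul_assoc a.1 b.1 c.1) x.1
    have h₂ := Set.ext_iff.mp (hmul_assoc a.2 b.2 c.2) x.2
    simp only [Set.mem_iUnion, Set.mem_prod, exists_prop] at *
    constructor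
    · rintro ⟨y, ⟨hy1, hy2⟩, hx1, hx2⟩
      obtain ⟨z₁, hz₁, hz₁'⟩ := h₁.mp ⟨y.1, hy1, hx1⟩
      obtain ⟨z₂, hz₂, hz₂'⟩ := h₂.mp ⟨y.2, hy2, hx2⟩
      exact ⟨(z₁, z₂), ⟨hz₁, hz₂⟩, hz₁', hz₂'⟩
    · rintro ⟨y, ⟨hy1, hy2⟩, hx1, hx2⟩
      obtain ⟨z₁, hz₁, hz₁'⟩ := h₁.mpr ⟨y.1, hy1, hx1⟩
      obtain ⟨z₂, hz₂, hz₂'⟩ := h₂.mpr ⟨y.2, hy2, hx2⟩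
      exact ⟨(z₁, z₂), ⟨hz₁, hz₂⟩, hz₁', hz₂'⟩
  neg_hmul a b := by
    ext x
    have h₁ := Set.ext_iff.mp (neg_hmul a.1 b.1) x.1
    have h₂ := Set.ext_iff.mp (neg_hmul a.2 b.2) x.2
    simp only [Set.mem_prod, Set.mem_image, Prod.fst_neg, Prod.snd_neg] at *
    constructor
    · rintro ⟨hx1, hx2⟩
      obtain ⟨u₁, hu₁, hu₁'⟩ := h₁.mp hx1
      obtain ⟨u₂, hu₂, hu₂'⟩ := h₂.mp hx2
      exact ⟨(u₁, u₂), ⟨hu₁, hu₂⟩, Prod.ext hu₁' hu₂'⟩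
    · rintro ⟨u, ⟨hu1, hu2⟩, hux⟩
      subst hux
      exact ⟨h₁.mpr ⟨u.1, hu1, rfl⟩, h₂.mpr ⟨u.2, hu2, rfl⟩⟩
  hmul_add a b c := by
    rintro ⟨x₁, x₂⟩ ⟨hx1, hx2⟩
    obtain ⟨u₁, hu₁, v₁, hv₁, h₁⟩ := hmul_add a.1 b.1 c.1 hx1
    obtain ⟨u₂, hu₂, v₂, hv₂, h₂⟩ := hmul_add a.2 b.2 c.2 hx2
    exact ⟨(u₁, u₂), ⟨hu₁, hu₂⟩, (v₁, v₂), ⟨hv₁, hv₂⟩, Prod.ext h₁ h₂⟩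
  e := (e, e)
  e_mem a := ⟨e_mem a.1, e_mem a.2⟩

end MulHyperring

/-!
Hyperproducts and powers in `G₁ × G₂` are computed componentwise, so
`rad (A₁ × A₂) = rad A₁ × rad A₂` and the quasi `(S₁ × S₂)`-primary condition splits into a
condition on each factor. Testing it on `(e, a₂) ∘ (a₁, e) ⊆ A₁ × A₂` puts `t₁` or `t₂` into the
radical, so some `Sᵢ` meets `Aᵢ`. An element `s₁ ∈ S₁ ∩ A₁` makes the first factor of the condition
automatic (`s₁ ∘ x ⊆ A₁`), and what is left is the quasi `S₂`-primary condition for `A₂`.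
-/

namespace MulHyperring

section Basic

variable {G : Type*} [MulHyperring G]

lemma mem_hmul_e (a : G) : a ∈ hmul a e := by
  rw [hmul_comm]
  exact e_mem a

lemma hPow_one (a : G) : hPow a 1 = {a} := rfl

lemma hPow_succ (a : G) {n : ℕ} (hn : 1 ≤ n) : hPow a (n + 1) = smulSet a (hPow a n) := by
  obtain ⟨m, rfl⟩ := Nat.exists_eq_add_of_le' hn
  rfl

lemma mem_smulSet {a x : G} {B : Set G} : x ∈ smulSet a B ↔ ∃ b ∈ B, x ∈ hmul a b := by
  simp only [smulSet, mem_iUnion, exists_prop]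

lemma hPow_nonempty (a : G) {n : ℕ} (hn : 1 ≤ n) : (hPow a n).Nonempty := by
  induction n, hn using Nat.le_induction with
  | base => exact singleton_nonempty a
  | succ n hn ih =>
    obtain ⟨x, hx⟩ := ih
    obtain ⟨y, hy⟩ := hmul_nonempty a x
    exact ⟨y, (hPow_succ a hn).symm ▸ mem_smulSet.2 ⟨x, hx, hy⟩⟩

lemma IsHyperideal.hmul_subset_of_mem_left {A : Set G} (hA : IsHyperideal A) {x : G}
    (hx : x ∈ A) (r : G) : hmul x r ⊆ A :=
  hmul_comm x r ▸ hA.2.2 r x hx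

lemma IsHyperideal.hPow_subset_of_le {A : Set G} (hA : IsHyperideal A) (a : G) {m n : ℕ}
    (hm : 1 ≤ m) (hmn : m ≤ n) (hmA : hPow a m ⊆ A) : hPow a n ⊆ A := by
  induction n, hmn using Nat.le_induction with
  | base => exact hmA
  | succ n hn ih =>
    intro x hx
    obtain ⟨b, hb, hx⟩ := mem_smulSet.1 (hPow_succ a (hm.trans hn) ▸ hx)
    exact hA.2.2 a b (ih hb) hx

lemma subset_rad (A : Set G) : A ⊆ rad A :=
  fun a ha => ⟨1, le_rfl, (hPow_one a).symm ▸ singleton_subset_iff.2 ha⟩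

lemma IsMCS.hPow_inter_nonempty {S : Set G} (hS : IsMCS S) {t : G} (ht : t ∈ S) {n : ℕ}
    (hn : 1 ≤ n) : (hPow t n ∩ S).Nonempty := by
  induction n, hn using Nat.le_induction with
  | base => exact ⟨t, rfl, ht⟩
  | succ n hn ih =>
    obtain ⟨x, hx, hxS⟩ := ih
    obtain ⟨y, hy, hyS⟩ := hS.2 t ht x hxS
    exact ⟨y, (hPow_succ t hn).symm ▸ mem_smulSet.2 ⟨x, hx, hy⟩, hyS⟩

lemma IsMCS.inter_nonempty_of_mem_rad {S A : Set G} (hS : IsMCS S) {t : G} (htS : t ∈ S)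
    (htA : t ∈ rad A) : (S ∩ A).Nonempty := by
  obtain ⟨n, hn, hnA⟩ := htA
  obtain ⟨x, hx, hxS⟩ := hS.hPow_inter_nonempty htS hn
  exact ⟨x, hxS, hnA hx⟩

end Basic

section Prod

variable {G₁ G₂ : Type*} [MulHyperring G₁] [MulHyperring G₂]

lemma hmul_prod (a b : G₁ × G₂) : hmul a b = hmul a.1 b.1 ×ˢ hmul a.2 b.2 := rfl

lemma hmul_subset_prod_iff {a b : G₁ × G₂} {B₁ : Set G₁} {B₂ : Set G₂} :
    hmul a b ⊆ B₁ ×ˢ B₂ ↔ hmul a.1 b.1 ⊆ B₁ ∧ hmul a.2 b.2 ⊆ B₂ :=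
  prod_subset_prod_iff' ((hmul_nonempty _ _).prod (hmul_nonempty _ _))

lemma smulSet_prod (a : G₁ × G₂) (X : Set G₁) (Y : Set G₂) :
    smulSet a (X ×ˢ Y) = smulSet a.1 X ×ˢ smulSet a.2 Y := by
  ext ⟨x, y⟩
  simp only [mem_smulSet, mem_prod, hmul_prod, Prod.exists]
  constructor
  · rintro ⟨b₁, b₂, ⟨hb₁, hb₂⟩, hx, hy⟩
    exact ⟨⟨b₁, hb₁, hx⟩, ⟨b₂, hb₂, hy⟩⟩
  · rintro ⟨⟨b₁, hb₁, hx⟩, ⟨b₂, hb₂, hy⟩⟩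
    exact ⟨b₁, b₂, ⟨hb₁, hb₂⟩, hx, hy⟩

lemma hPow_prod (a : G₁ × G₂) {n : ℕ} (hn : 1 ≤ n) :
    hPow a n = hPow a.1 n ×ˢ hPow a.2 n := by
  induction n, hn using Nat.le_induction with
  | base => exact singleton_prod_singleton.symm
  | succ n hn ih => rw [hPow_succ a hn, hPow_succ a.1 hn, hPow_succ a.2 hn, ih, smulSet_prod]

lemma IsHyperideal.prod {A₁ : Set G₁} {A₂ : Set G₂} (h₁ : IsHyperideal A₁)
    (h₂ : IsHyperideal A₂) : IsHyperideal (A₁ ×ˢ A₂) :=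
  ⟨h₁.1.prod h₂.1, fun _ hx _ hy => ⟨h₁.2.1 _ hx.1 _ hy.1, h₂.2.1 _ hx.2 _ hy.2⟩,
    fun _ _ hx => prod_mono (h₁.2.2 _ _ hx.1) (h₂.2.2 _ _ hx.2)⟩

lemma rad_prod {A₁ : Set G₁} {A₂ : Set G₂} (h₁ : IsHyperideal A₁) (h₂ : IsHyperideal A₂) :
    rad (A₁ ×ˢ A₂) = rad A₁ ×ˢ rad A₂ := by
  ext ⟨a, b⟩
  constructor
  · rintro ⟨n, hn, hnA⟩
    rw [hPow_prod _ hn, prod_subset_prod_iff' ((hPow_nonempty a hn).prod (hPow_nonempty b hn))]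
      at hnA
    exact ⟨⟨n, hn, hnA.1⟩, ⟨n, hn, hnA.2⟩⟩
  · rintro ⟨⟨n₁, hn₁, hA₁⟩, ⟨n₂, hn₂, hA₂⟩⟩
    have hn : 1 ≤ max n₁ n₂ := hn₁.trans (le_max_left _ _)
    refine ⟨max n₁ n₂, hn, ?_⟩
    rw [hPow_prod _ hn]
    exact prod_mono (h₁.hPow_subset_of_le a hn₁ (le_max_left _ _) hA₁)
      (h₂.hPow_subset_of_le b hn₂ (le_max_right _ _) hA₂)

lemma isQuasiSPrimary_prod_iff {A₁ S₁ : Set G₁} {A₂ S₂ : Set G₂} (h₁ : IsHyperideal A₁)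
    (h₂ : IsHyperideal A₂) :
    IsQuasiSPrimary (S₁ ×ˢ S₂) (A₁ ×ˢ A₂) ↔ (A₁ ∩ S₁ = ∅ ∨ A₂ ∩ S₂ = ∅) ∧
      ∃ t₁ ∈ S₁, ∃ t₂ ∈ S₂, ∀ u₁ u₂ v₁ v₂, hmul u₁ v₁ ⊆ A₁ → hmul u₂ v₂ ⊆ A₂ →
        hmul t₁ u₁ ⊆ rad A₁ ∧ hmul t₂ u₂ ⊆ rad A₂ ∨
          hmul t₁ v₁ ⊆ rad A₁ ∧ hmul t₂ v₂ ⊆ rad A₂ := by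
  simp only [IsQuasiSPrimary, rad_prod h₁ h₂, prod_inter_prod, prod_eq_empty_iff,
    hmul_subset_prod_iff, Prod.forall, Prod.exists, mem_prod, and_imp, and_assoc,
    true_and, exists_and_left, h₁.prod h₂]

lemma isQuasiSPrimary_prod_comm {A₁ S₁ : Set G₁} {A₂ S₂ : Set G₂} (h₁ : IsHyperideal A₁)
    (h₂ : IsHyperideal A₂) :
    IsQuasiSPrimary (S₁ ×ˢ S₂) (A₁ ×ˢ A₂) ↔ IsQuasiSPrimary (S₂ ×ˢ S₁) (A₂ ×ˢ A₁) := by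
  rw [isQuasiSPrimary_prod_iff h₁ h₂, isQuasiSPrimary_prod_iff h₂ h₁]
  constructor <;>
  · rintro ⟨hdisj, t₁, ht₁, t₂, ht₂, h⟩
    exact ⟨hdisj.symm, t₂, ht₂, t₁, ht₁,
      fun u₂ u₁ v₂ v₁ hv₂ hv₁ => (h u₁ u₂ v₁ v₂ hv₁ hv₂).imp And.symm And.symm⟩

lemma isQuasiSPrimary_prod_iff_of_inter_nonempty_left {A₁ S₁ : Set G₁} {A₂ S₂ : Set G₂}
    (h₁ : IsHyperideal A₁) (h₂ : IsHyperideal A₂) (hSA₁ : (S₁ ∩ A₁).Nonempty) :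
    IsQuasiSPrimary (S₁ ×ˢ S₂) (A₁ ×ˢ A₂) ↔ IsQuasiSPrimary S₂ A₂ := by
  obtain ⟨s₁, hs₁S, hs₁A⟩ := hSA₁
  have hdisj₁ : A₁ ∩ S₁ ≠ ∅ := nonempty_iff_ne_empty.1 ⟨s₁, hs₁A, hs₁S⟩
  have hs₁rad : ∀ x, hmul s₁ x ⊆ rad A₁ :=
    fun x => (h₁.hmul_subset_of_mem_left hs₁A x).trans (subset_rad A₁)
  rw [isQuasiSPrimary_prod_iff h₁ h₂, or_iff_right hdisj₁]
  refine ⟨fun ⟨hdisj₂, _, _, t₂, ht₂, h⟩ => ⟨h₂, hdisj₂, t₂, ht₂, fun u v huv => ?_⟩,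
    fun ⟨_, hdisj₂, t₂, ht₂, h⟩ => ⟨hdisj₂, s₁, hs₁S, t₂, ht₂, fun u₁ u₂ v₁ v₂ _ huv => ?_⟩⟩
  · exact (h s₁ u s₁ v (h₁.hmul_subset_of_mem_left hs₁A s₁) huv).imp And.right And.right
  · exact (h u₂ v₂ huv).imp (⟨hs₁rad u₁, ·⟩) (⟨hs₁rad v₁, ·⟩)

lemma isQuasiSPrimary_prod_iff_of_inter_nonempty_right {A₁ S₁ : Set G₁} {A₂ S₂ : Set G₂}
    (h₁ : IsHyperideal A₁) (h₂ : IsHyperideal A₂) (hSA₂ : (S₂ ∩ A₂).Nonempty) :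
    IsQuasiSPrimary (S₁ ×ˢ S₂) (A₁ ×ˢ A₂) ↔ IsQuasiSPrimary S₁ A₁ :=
  (isQuasiSPrimary_prod_comm h₁ h₂).trans
    (isQuasiSPrimary_prod_iff_of_inter_nonempty_left h₂ h₁ hSA₂)

lemma IsQuasiSPrimary.prod_inter_nonempty {A₁ S₁ : Set G₁} {A₂ S₂ : Set G₂}
    (h₁ : IsHyperideal A₁) (h₂ : IsHyperideal A₂) (hS₁ : IsMCS S₁) (hS₂ : IsMCS S₂)
    (hq : IsQuasiSPrimary (S₁ ×ˢ S₂) (A₁ ×ˢ A₂)) :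
    (S₁ ∩ A₁).Nonempty ∨ (S₂ ∩ A₂).Nonempty := by
  obtain ⟨-, t₁, ht₁, t₂, ht₂, h⟩ := (isQuasiSPrimary_prod_iff h₁ h₂).1 hq
  obtain ⟨a₁, ha₁⟩ := h₁.1
  obtain ⟨a₂, ha₂⟩ := h₂.1
  rcases h e a₂ a₁ e (h₁.2.2 e a₁ ha₁) (h₂.hmul_subset_of_mem_left ha₂ e) with h | h
  · exact .inl (hS₁.inter_nonempty_of_mem_rad ht₁ (h.1 (mem_hmul_e t₁)))
  · exact .inr (hS₂.inter_nonempty_of_mem_rad ht₂ (h.2 (mem_hmul_e t₂)))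

end Prod

end MulHyperring

open MulHyperring in
theorem quasiSPrimary_prod {G₁ G₂ : Type*} [MulHyperring G₁] [MulHyperring G₂]
    (A₁ S₁ : Set G₁) (A₂ S₂ : Set G₂) (hA₁ : IsCHyperideal A₁) (hA₂ : IsCHyperideal A₂)
    (hS₁ : IsMCS S₁) (hS₂ : IsMCS S₂) :
    IsQuasiSPrimary (S₁ ×ˢ S₂) (A₁ ×ˢ A₂) ↔
      ((S₁ ∩ A₁).Nonempty ∧ IsQuasiSPrimary S₂ A₂) ∨
      ((S₂ ∩ A₂).Nonempty ∧ IsQuasiSPrimary S₁ A₁) := by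
  constructor
  · intro hq
    rcases hq.prod_inter_nonempty hA₁.1 hA₂.1 hS₁ hS₂ with h | h
    · exact .inl ⟨h, (isQuasiSPrimary_prod_iff_of_inter_nonempty_left hA₁.1 hA₂.1 h).1 hq⟩
    · exact .inr ⟨h, (isQuasiSPrimary_prod_iff_of_inter_nonempty_right hA₁.1 hA₂.1 h).1 hq⟩
  · rintro (⟨h, hq⟩ | ⟨h, hq⟩)
    · exact (isQuasiSPrimary_prod_iff_of_inter_nonempty_left hA₁.1 hA₂.1 h).2 hq
    · exact (isQuasiSPrimary_prod_iff_of_inter_nonempty_right hA₁.1 hA₂.1 h).2 hq
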